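/- arXiv:1605.00180 — 5 statements merged into one kernel-verified Lean document; each statement's English description precedes it below -/
import Mathlib

section
/- If x, y, u, w are integers with 0 < x ≤ n, 0 < u ≤ n, y > n²/2, and x² + y² = u² + w², with y, w nonnegative, then x = u and y = w. -/
/-!
Both `x²` and `u²` lie in `[1, n²]`, so `x² - u² = w² - y²` has absolute value below `n²`. Two
distinct nonnegative squares `y² > w²` differ by at least `2y - 1`, which is at least `n²` once
`2y > n²`; hence `y = w`, and then `x² = u²` forces `x = u`.
-/

lemma sq_sub_sq_lt_sq {x u n : ℤ} (hx₀ : 0 ≤ x) (hxn : x ≤ n) (hu : u ≠ 0) :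
    x ^ 2 - u ^ 2 < n ^ 2 := by
  have hxn2 : x ^ 2 ≤ n ^ 2 := pow_le_pow_left₀ hx₀ hxn 2
  have hu2 : 0 < u ^ 2 := by positivity
  linarith

lemma two_mul_sub_one_le_sq_sub_sq {y w : ℤ} (hw : 0 ≤ w) (hwy : w < y) :
    2 * y - 1 ≤ y ^ 2 - w ^ 2 := by
  have : w ^ 2 ≤ (y - 1) ^ 2 := pow_le_pow_left₀ hw (by omega) 2
  linarith

theorem stmt0_general (n x y u w : ℤ)
    (hx1 : 0 < x) (hx2 : x ≤ n) (hu1 : 0 < u) (hu2 : u ≤ n)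
    (hy : 2 * y > n ^ 2) (hw0 : 0 ≤ w)
    (h : x ^ 2 + y ^ 2 = u ^ 2 + w ^ 2) : x = u ∧ y = w := by
  have hy0 : 0 ≤ y := by nlinarith [sq_nonneg n]
  have hxu := sq_sub_sq_lt_sq hx1.le hx2 hu1.ne'
  have hux := sq_sub_sq_lt_sq hu1.le hu2 hx1.ne'
  have hyw : y = w := by
    rcases lt_trichotomy y w with hlt | heq | hgt
    · linarith [two_mul_sub_one_le_sq_sub_sq hy0 hlt]
    · exact heq
    · linarith [two_mul_sub_one_le_sq_sub_sq hw0 hgt]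
  subst hyw
  exact ⟨(pow_left_inj₀ hx1.le hu1.le two_ne_zero).mp (by linarith), rfl⟩

theorem stmt0 (n x y u w : ℤ) (hn : 0 < n)
    (hx1 : 0 < x) (hx2 : x ≤ n) (hu1 : 0 < u) (hu2 : u ≤ n)
    (hy : 2 * y > n ^ 2) (hy0 : 0 ≤ y) (hw0 : 0 ≤ w)
    (h : x ^ 2 + y ^ 2 = u ^ 2 + w ^ 2) : x = u ∧ y = w :=
  stmt0_general n x y u w hx1 hx2 hu1 hu2 hy hw0 h
end

section
/- If x, y, u, w are integers with 0 ≤ x ≤ n, 0 ≤ u ≤ n, 2y > n² + 1, w ≥ 0, and x² + y² = u² + w², then x = u and y = w. -/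
/-! Distinct nonnegative integers `y ≠ w` have squares at least `2 * max y w - 1 ≥ 2 * y - 1 > n ^ 2`
apart, whereas `|x ^ 2 - u ^ 2| ≤ n ^ 2`; hence `y = w`, and then `x ^ 2 = u ^ 2` gives `x = u`. -/

lemma two_mul_sub_one_le_sq_sub_sq_s1 {a b : ℤ} (hb : 0 ≤ b) (hba : b < a) :
    2 * a - 1 ≤ a ^ 2 - b ^ 2 := by
  nlinarith

lemma sq_sub_sq_le_sq {R : Type*} [Ring R] [LinearOrder R] [IsStrictOrderedRing R] {a n : R}
    (ha : 0 ≤ a) (han : a ≤ n) (b : R) : a ^ 2 - b ^ 2 ≤ n ^ 2 :=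
  (sub_le_self _ (sq_nonneg b)).trans (pow_le_pow_left₀ ha han 2)

theorem stmt1_general (n x y u w : ℤ)
    (hx1 : 0 ≤ x) (hx2 : x ≤ n) (hu1 : 0 ≤ u) (hu2 : u ≤ n)
    (hy : 2 * y > n ^ 2 + 1) (hy0 : 0 ≤ y) (hw0 : 0 ≤ w)
    (h : x ^ 2 + y ^ 2 = u ^ 2 + w ^ 2) : x = u ∧ y = w := by
  have hyw : y = w := by
    by_contra hne
    rcases lt_or_gt_of_ne hne with hyw | hwy
    · have hgap := two_mul_sub_one_le_sq_sub_sq_s1 hy0 hyw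
      have hbound := sq_sub_sq_le_sq hx1 hx2 u
      linarith
    · have hgap := two_mul_sub_one_le_sq_sub_sq_s1 hw0 hwy
      have hbound := sq_sub_sq_le_sq hu1 hu2 x
      linarith
  subst hyw
  exact ⟨(sq_eq_sq₀ hx1 hu1).mp (by linarith), rfl⟩

theorem stmt1 (n x y u w : ℤ) (hn : 0 < n)
    (hx1 : 0 ≤ x) (hx2 : x ≤ n) (hu1 : 0 ≤ u) (hu2 : u ≤ n)
    (hy : 2 * y > n ^ 2 + 1) (hy0 : 0 ≤ y) (hw0 : 0 ≤ w)
    (h : x ^ 2 + y ^ 2 = u ^ 2 + w ^ 2) : x = u ∧ y = w :=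
  stmt1_general n x y u w hx1 hx2 hu1 hu2 hy hy0 hw0 h
end

section
/- With T(n,k) as defined, T(n,2) = n for all integers n > 3. -/
/-- Squared Euclidean distance between two integer points. -/
def dsq (p q : ℤ × ℤ) : ℤ := (p.1 - q.1) ^ 2 + (p.2 - q.2) ^ 2

/-- Three points are collinear (zero-area triangle). -/
def Collin (p q r : ℤ × ℤ) : Prop :=
  (q.1 - p.1) * (r.2 - p.2) = (r.1 - p.1) * (q.2 - p.2)

/-- No three points of `S` are the vertices of an isosceles triangle of nonzero area. -/
def IsoFree (S : Finset (ℤ × ℤ)) : Prop :=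
  ∀ p ∈ S, ∀ q ∈ S, ∀ r ∈ S, p ≠ q → p ≠ r → q ≠ r → ¬ Collin p q r →
    ¬ (dsq p q = dsq p r ∨ dsq p q = dsq q r ∨ dsq p r = dsq q r)

/-- The `n × k` grid `{1,…,n} × {1,…,k}` in `ℤ²`. -/
noncomputable def grid (n k : ℕ) : Finset (ℤ × ℤ) := Finset.Icc 1 (n : ℤ) ×ˢ Finset.Icc 1 (k : ℤ)

/-- Maximum size of an isosceles-triangle-free subset of the `n × k` grid. -/
noncomputable def T (n k : ℕ) : ℕ :=
  sSup {N | ∃ S : Finset (ℤ × ℤ), S ⊆ grid n k ∧ IsoFree S ∧ S.card = N}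

/-! A column `x` of `S ⊆ [1, n] × [1, 2]` is full if it holds both of its points. A full column and
any point in a neighbouring column span a right isosceles triangle, so both neighbours of a full
column are empty. Sending every full column to an empty neighbour injectively shows there are at
most as many full columns as empty ones, i.e. `#S ≤ n`; the only obstruction, full columns
`1, 3, 5`, contains the isosceles triangle `(1, 1), (5, 1), (3, 2)`. A row of the grid attains `n`.
-/

open Finset

theorem IsoFree.not_isosceles {S : Finset (ℤ × ℤ)} (hS : IsoFree S) {p q r : ℤ × ℤ}
    (hp : p ∈ S) (hq : q ∈ S) (hr : r ∈ S) (hpqr : ¬ Collin p q r) (hiso : dsq p q = dsq p r) :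
    False := by
  have hpq : p ≠ q := by rintro rfl; simp [Collin] at hpqr
  have hpr : p ≠ r := by rintro rfl; simp [Collin] at hpqr
  have hqr : q ≠ r := by rintro rfl; simp [Collin] at hpqr
  exact hS p hp q hq r hr hpq hpr hqr hpqr (Or.inl hiso)

theorem IsoFree.not_right_isosceles {S : Finset (ℤ × ℤ)} (hS : IsoFree S) {x y a b : ℤ}
    (hxa : (x, a) ∈ S) (hxb : (x, b) ∈ S) (hya : (y, a) ∈ S) (hab : a ≠ b)
    (hlegs : (x - y) ^ 2 = (a - b) ^ 2) : False := by
  have hxy : x ≠ y := by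
    rintro rfl
    exact hab (sub_eq_zero.mp (pow_eq_zero_iff two_ne_zero |>.mp (by simpa using hlegs.symm)))
  refine hS.not_isosceles hxa hxb hya ?_ (by simp only [dsq]; linear_combination -hlegs)
  simp only [Collin, sub_self, mul_zero, zero_eq_mul, not_or]
  exact ⟨sub_ne_zero.mpr hxy.symm, sub_ne_zero.mpr hab.symm⟩

theorem IsoFree.not_apex_on_bisector {S : Finset (ℤ × ℤ)} (hS : IsoFree S) {x d a b : ℤ}
    (hl : (x - d, a) ∈ S) (hr : (x + d, a) ∈ S) (hx : (x, b) ∈ S) (hd : d ≠ 0) (hab : a ≠ b) :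
    False := by
  refine hS.not_isosceles hx hl hr ?_ (by simp only [dsq]; ring)
  intro h
  have : 2 * d * (a - b) = 0 := by simp only [Collin] at h; linear_combination -h
  simp [hd, sub_eq_zero, hab] at this

theorem card_le_card_Icc_sdiff_of_isolated {n : ℕ} (hn : 4 ≤ n) {F U : Finset ℤ}
    (hF : F ⊆ Icc 1 (n : ℤ)) (hisol : ∀ x ∈ F, x - 1 ∉ U ∧ x + 1 ∉ U)
    (h135 : ¬ (1 ∈ F ∧ 3 ∈ F ∧ 5 ∈ F)) : #F ≤ #(Icc 1 (n : ℤ) \ U) := by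
  -- Send each point to its left neighbour, except `1` (and `3`, if `1 ∈ F`), which go right;
  -- a collision would need `1, 3, 5 ∈ F`.
  let shift : ℤ → ℤ := fun x => if x = 1 ∨ (x = 3 ∧ 1 ∈ F) then x + 1 else x - 1
  refine card_le_card_of_injOn shift (fun x hx => ?_) (fun x hx y hy hxy => ?_)
  · have hxn := mem_Icc.mp (hF hx)
    have hn' : (4 : ℤ) ≤ n := by exact_mod_cast hn
    simp only [shift, coe_sdiff, coe_Icc, Set.mem_sdiff, Set.mem_Icc, mem_coe]
    split_ifs with h
    · exact ⟨by omega, (hisol x hx).2⟩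
    · exact ⟨by omega, (hisol x hx).1⟩
  · simp only [mem_coe] at hx hy
    simp only [shift] at hxy
    split_ifs at hxy <;> grind

def row (S : Finset (ℤ × ℤ)) (a : ℤ) : Finset ℤ := {p ∈ S | p.2 = a}.image Prod.fst

@[simp]
theorem mem_row {S : Finset (ℤ × ℤ)} {a x : ℤ} : x ∈ row S a ↔ (x, a) ∈ S := by
  simp [row]

theorem card_row (S : Finset (ℤ × ℤ)) (a : ℤ) : #(row S a) = #{p ∈ S | p.2 = a} :=
  card_image_of_injOn fun _ hp _ hq h =>
    Prod.ext h ((mem_filter.1 hp).2.trans (mem_filter.1 hq).2.symm)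

theorem row_subset_Icc {S : Finset (ℤ × ℤ)} {n k : ℕ} (hS : S ⊆ grid n k) (a : ℤ) :
    row S a ⊆ Icc 1 (n : ℤ) := fun _ hx =>
  (mem_product.1 (hS (mem_row.1 hx))).1

theorem card_eq_card_row_add_card_row {S : Finset (ℤ × ℤ)} {n : ℕ} (hS : S ⊆ grid n 2) :
    #S = #(row S 1) + #(row S 2) := by
  have hrows : ∀ p ∈ S, p.2 ∈ ({1, 2} : Finset ℤ) := fun p hp => by
    have := (mem_Icc.1 (mem_product.1 (hS hp)).2)
    simp only [mem_insert, mem_singleton]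
    push_cast at this
    omega
  rw [card_eq_sum_card_fiberwise hrows, sum_pair (by norm_num), card_row, card_row]

theorem isoFree_of_forall_snd_eq {S : Finset (ℤ × ℤ)} {c : ℤ} (hS : ∀ p ∈ S, p.2 = c) :
    IsoFree S := fun p hp q hq r hr _ _ _ hpqr =>
  absurd (by simp [Collin, hS p hp, hS q hq, hS r hr]) hpqr

theorem IsoFree.card_le_of_subset_grid_two {n : ℕ} (hn : 4 ≤ n) {S : Finset (ℤ × ℤ)}
    (hsub : S ⊆ grid n 2) (hS : IsoFree S) : #S ≤ n := by
  set A := row S 1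
  set B := row S 2
  have hisol : ∀ x ∈ A ∩ B, ∀ y, (x - y) ^ 2 = 1 → y ∉ A ∪ B := by
    intro x hx y hxy hy
    simp only [mem_inter, mem_union, A, B, mem_row] at hx hy
    rcases hy with hy | hy
    · exact hS.not_right_isosceles hx.1 hx.2 hy (by norm_num) (by simpa using hxy)
    · exact hS.not_right_isosceles hx.2 hx.1 hy (by norm_num) (by simpa using hxy)
  have h135 : ¬ (1 ∈ A ∩ B ∧ 3 ∈ A ∩ B ∧ 5 ∈ A ∩ B) := by
    rintro ⟨h1, h3, h5⟩
    simp only [mem_inter, A, B, mem_row] at h1 h3 h5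
    exact hS.not_apex_on_bisector (x := 3) (d := 2) h1.1 h5.1 h3.2 two_ne_zero (by norm_num)
  have hgaps := card_le_card_Icc_sdiff_of_isolated hn
    (inter_subset_left.trans (row_subset_Icc hsub 1))
    (fun x hx => ⟨hisol x hx _ (by ring), hisol x hx _ (by ring)⟩) h135
  have hU : A ∪ B ⊆ Icc 1 (n : ℤ) := union_subset (row_subset_Icc hsub 1) (row_subset_Icc hsub 2)
  calc #S = #A + #B := card_eq_card_row_add_card_row hsub
    _ = #(A ∪ B) + #(A ∩ B) := (card_union_add_card_inter A B).symm
    _ ≤ #(A ∪ B) + #(Icc 1 (n : ℤ) \ (A ∪ B)) := by gcongr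
    _ = n := by rw [add_comm, card_sdiff_add_card_eq_card hU, Int.card_Icc]; simp

theorem stmt11 (n : ℕ) (hn : 3 < n) : T n 2 = n := by
  refine IsGreatest.csSup_eq ⟨⟨Icc 1 (n : ℤ) ×ˢ {1}, ?_, ?_, ?_⟩, ?_⟩
  · exact product_subset_product_right (by simp)
  · exact isoFree_of_forall_snd_eq fun _ hp => mem_singleton.1 (mem_product.1 hp).2
  · simp
  · rintro _ ⟨S, hsub, hS, rfl⟩
    exact hS.card_le_of_subset_grid_two hn hsub
end

section
/- For odd n > 4, the set of n + 1 points {(1,i) : 2 ≤ i ≤ n} ∪ {(2,1), (3,1)} in the n × 3 grid contains no three points that form an isosceles triangle of nonzero area; hence T(n,3) ≥ n + 1. -/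
/-! Every isosceles triangle has an apex `p` with `dsq p q = dsq p r`, so it suffices to compare
distances from a single point. Seen from a column point `(1, a)`, a column point `(1, b)` and a foot
point `(x, 1)` at the same distance would form a Pythagorean triple
`(x - 1) ^ 2 + (a - 1) ^ 2 = (a - b) ^ 2` with a leg `x - 1 ∈ {1, 2}`, and no such triple exists.
Seen from a foot point, the other foot point is at distance `1`, the column points are farther
away and at pairwise different distances. Transposing the set puts it into the `n × 3` grid. -/

theorem sq_add_sq_ne_sq {d u w : ℤ} (hd : d = 1 ∨ d = 2) (hu : u ≠ 0) :
    d ^ 2 + u ^ 2 ≠ w ^ 2 := by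
  intro h
  rw [← sq_abs u, ← sq_abs w] at h
  have hu_pos : 1 ≤ |u| := Int.one_le_abs hu
  have hlt : |u| < |w| := by
    refine lt_of_pow_lt_pow_left₀ 2 (abs_nonneg w) ?_
    rcases hd with rfl | rfl <;> linarith
  -- a gap of one makes `d ^ 2 = 2 |u| + 1` odd and at least 3, a larger gap makes `d ^ 2 ≥ 8`
  obtain hsucc | hfar : |w| = |u| + 1 ∨ |u| + 2 ≤ |w| := by omega
  · have hodd : d ^ 2 = 2 * |u| + 1 := by rw [hsucc] at h; linear_combination h
    rcases hd with rfl | rfl <;> omega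
  · rcases hd with rfl | rfl <;> nlinarith

theorem dsq_comm (p q : ℤ × ℤ) : dsq p q = dsq q p := by
  unfold dsq; ring

theorem dsq_swap (p q : ℤ × ℤ) : dsq p.swap q.swap = dsq p q := by
  simp only [dsq, Prod.fst_swap, Prod.snd_swap]; ring

theorem Collin.swap {p q r : ℤ × ℤ} (h : Collin p q r) : Collin q p r := by
  unfold Collin at *; linear_combination -h

theorem Collin.rotate {p q r : ℤ × ℤ} (h : Collin p q r) : Collin q r p := by
  unfold Collin at *; linear_combination h

theorem collin_swap_iff {p q r : ℤ × ℤ} : Collin p.swap q.swap r.swap ↔ Collin p q r := by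
  simp only [Collin, Prod.fst_swap, Prod.snd_swap]
  constructor <;> intro h <;> linear_combination -h

theorem isoFree_of_apex {S : Finset (ℤ × ℤ)}
    (h : ∀ p ∈ S, ∀ q ∈ S, ∀ r ∈ S, p ≠ q → p ≠ r → q ≠ r → ¬ Collin p q r →
      dsq p q ≠ dsq p r) :
    IsoFree S := by
  intro p hp q hq r hr hpq hpr hqr hcol hiso
  rcases hiso with hp_apex | hq_apex | hr_apex
  · exact h p hp q hq r hr hpq hpr hqr hcol hp_apex
  · exact h q hq p hp r hr hpq.symm hqr hpr (fun hc => hcol hc.swap)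
      (by rwa [dsq_comm q p])
  · exact h r hr p hp q hq hpr.symm hqr.symm hpq (fun hc => hcol hc.rotate)
      (by rwa [dsq_comm r p, dsq_comm r q])

theorem IsoFree.image_swap {S : Finset (ℤ × ℤ)} (hS : IsoFree S) :
    IsoFree (S.image Prod.swap) := by
  simp only [IsoFree, Finset.mem_image, forall_exists_index, and_imp, forall_apply_eq_imp_iff₂,
    Prod.swap_inj, ne_eq, collin_swap_iff, dsq_swap]
  exact hS

theorem card_le_T {n k : ℕ} {S : Finset (ℤ × ℤ)} (hS : S ⊆ grid n k) (hfree : IsoFree S) :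
    S.card ≤ T n k :=
  le_csSup ⟨(grid n k).card, by rintro _ ⟨S', hS', -, rfl⟩; exact Finset.card_le_card hS'⟩
    ⟨S, hS, hfree, rfl⟩

def InHook (p : ℤ × ℤ) : Prop := (∃ b, 2 ≤ b ∧ p = (1, b)) ∨ p = (2, 1) ∨ p = (3, 1)

theorem dsq_column_ne_dsq_foot {a b x : ℤ} (ha : 2 ≤ a) (hx : x = 2 ∨ x = 3) :
    dsq (1, a) (1, b) ≠ dsq (1, a) (x, 1) := by
  have hleg : x - 1 = 1 ∨ x - 1 = 2 := by omega
  have hpyth := sq_add_sq_ne_sq (w := a - b) hleg (show a - 1 ≠ 0 by omega)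
  unfold dsq
  intro h
  exact hpyth (by linear_combination -h)

theorem dsq_ne_of_column_apex {a : ℤ} {q r : ℤ × ℤ} (ha : 2 ≤ a) (hq : InHook q)
    (hr : InHook r) (hqr : q ≠ r) (hcol : ¬ Collin (1, a) q r) :
    dsq (1, a) q ≠ dsq (1, a) r := by
  rcases hq with ⟨b, -, rfl⟩ | rfl | rfl <;> rcases hr with ⟨c, -, rfl⟩ | rfl | rfl
  · exact absurd (by simp [Collin]) hcol
  · exact dsq_column_ne_dsq_foot ha (by norm_num)
  · exact dsq_column_ne_dsq_foot ha (by norm_num)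
  · exact (dsq_column_ne_dsq_foot ha (by norm_num)).symm
  · exact absurd rfl hqr
  · simp [dsq]
  · exact (dsq_column_ne_dsq_foot ha (by norm_num)).symm
  · simp [dsq]
  · exact absurd rfl hqr

theorem dsq_ne_of_foot_apex {x : ℤ} {q r : ℤ × ℤ} (hx : x = 2 ∨ x = 3) (hq : InHook q)
    (hr : InHook r) (hpq : (x, 1) ≠ q) (hpr : (x, 1) ≠ r) (hqr : q ≠ r) :
    dsq (x, 1) q ≠ dsq (x, 1) r := by
  have hcolumn (b : ℤ) : dsq (x, 1) (1, b) = (x - 1) ^ 2 + (b - 1) ^ 2 := by unfold dsq; ring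
  wlog hr_foot : r = (2, 1) ∨ r = (3, 1) generalizing q r
  · rcases hq with ⟨b, hb, rfl⟩ | hq_foot
    · obtain ⟨c, hc, rfl⟩ : ∃ c, 2 ≤ c ∧ r = (1, c) := hr.resolve_right hr_foot
      have hbc : b - 1 ≠ c - 1 := fun h => hqr (by rw [sub_left_inj.mp h])
      rwa [hcolumn, hcolumn, Ne, add_right_inj, pow_left_inj₀ (by omega) (by omega) two_ne_zero]
    · exact (this hr (Or.inr hq_foot) hpr hpq hqr.symm hq_foot).symm
  · have hr_dist : dsq (x, 1) r = 1 := by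
      rcases hx with rfl | rfl <;> rcases hr_foot with rfl | rfl <;> simp_all [dsq]
    obtain ⟨b, hb, rfl⟩ : ∃ b, 2 ≤ b ∧ q = (1, b) := by
      refine hq.resolve_right ?_
      rintro (rfl | rfl) <;> rcases hx with rfl | rfl <;> rcases hr_foot with rfl | rfl <;>
        simp_all
    rw [hr_dist, hcolumn]
    rcases hx with rfl | rfl <;> nlinarith

theorem isoFree_of_forall_inHook {S : Finset (ℤ × ℤ)} (hS : ∀ p ∈ S, InHook p) :
    IsoFree S := by
  refine isoFree_of_apex fun p hp q hq r hr hpq hpr hqr hcol => ?_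
  rcases hS p hp with ⟨a, ha, rfl⟩ | rfl | rfl
  · exact dsq_ne_of_column_apex ha (hS q hq) (hS r hr) hqr hcol
  · exact dsq_ne_of_foot_apex (Or.inl rfl) (hS q hq) (hS r hr) hpq hpr hqr
  · exact dsq_ne_of_foot_apex (Or.inr rfl) (hS q hq) (hS r hr) hpq hpr hqr

noncomputable def columnWithFoot (n : ℕ) : Finset (ℤ × ℤ) :=
  (Finset.Icc (2 : ℤ) (n : ℤ)).image (fun i => ((1 : ℤ), i)) ∪
    {((2 : ℤ), (1 : ℤ)), ((3 : ℤ), (1 : ℤ))}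

theorem inHook_of_mem_columnWithFoot {n : ℕ} {p : ℤ × ℤ} (hp : p ∈ columnWithFoot n) :
    InHook p := by
  simp only [columnWithFoot, Finset.mem_union, Finset.mem_image, Finset.mem_Icc,
    Finset.mem_insert, Finset.mem_singleton] at hp
  rcases hp with ⟨b, ⟨hb, -⟩, rfl⟩ | hfoot
  · exact Or.inl ⟨b, hb, rfl⟩
  · exact Or.inr hfoot

theorem card_columnWithFoot {n : ℕ} (hn : 1 ≤ n) : (columnWithFoot n).card = n + 1 := by
  rw [columnWithFoot, Finset.card_union_of_disjoint,
    Finset.card_image_of_injective _ (Prod.mk_right_injective 1), Int.card_Icc]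
  · rw [Finset.card_pair (by simp)]
    omega
  · simp only [Finset.disjoint_left, Finset.mem_image, Finset.mem_Icc, Finset.mem_insert,
      Finset.mem_singleton]
    rintro _ ⟨i, hi, rfl⟩ (h | h) <;> simp_all

theorem image_swap_columnWithFoot_subset_grid {n : ℕ} (hn : 1 ≤ n) :
    (columnWithFoot n).image Prod.swap ⊆ grid n 3 := by
  intro p hp
  simp only [columnWithFoot, Finset.mem_image, Finset.mem_union, Finset.mem_insert,
    Finset.mem_singleton, Finset.mem_Icc] at hp
  obtain ⟨q, ⟨i, hi, rfl⟩ | rfl | rfl, rfl⟩ := hp <;>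
    simp only [grid, Finset.mem_product, Finset.mem_Icc, Prod.fst_swap, Prod.snd_swap] <;>
    omega

theorem stmt12_general (n : ℕ) (hn : 4 < n) :
    IsoFree ((Finset.Icc (2 : ℤ) (n : ℤ)).image (fun i => ((1 : ℤ), i)) ∪
      {((2 : ℤ), (1 : ℤ)), ((3 : ℤ), (1 : ℤ))}) ∧ n + 1 ≤ T n 3 := by
  have hfree : IsoFree (columnWithFoot n) :=
    isoFree_of_forall_inHook fun _ => inHook_of_mem_columnWithFoot
  refine ⟨hfree, ?_⟩
  calc n + 1 = (columnWithFoot n).card := (card_columnWithFoot (by omega)).symm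
    _ = ((columnWithFoot n).image Prod.swap).card :=
      (Finset.card_image_of_injective _ Prod.swap_injective).symm
    _ ≤ T n 3 := card_le_T (image_swap_columnWithFoot_subset_grid (by omega)) hfree.image_swap

theorem stmt12 (n : ℕ) (hn : 4 < n) (hodd : Odd n) :
    IsoFree ((Finset.Icc (2 : ℤ) (n : ℤ)).image (fun i => ((1 : ℤ), i)) ∪
      {((2 : ℤ), (1 : ℤ)), ((3 : ℤ), (1 : ℤ))}) ∧ n + 1 ≤ T n 3 :=
  stmt12_general n hn
end

section
/- If k > (n-1)² + 1 and three points (0, y₁), (x, y₂), (k-1, y₃) with 0 ≤ y₁, y₂, y₃ ≤ n-1 and 0 < x < k-1 form an isosceles triangle with the two edges incident to the middle point equal in length, then y₁ = y₃, y₂ ≠ y₁, and 2x = k - 1 (so k must be odd). -/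
lemma dsq_sub_dsq (m x a b c : ℤ) :
    dsq (0, a) (x, b) - dsq (x, b) (m, c) = m * (2 * x - m) + ((a - b) ^ 2 - (b - c) ^ 2) := by
  simp only [dsq]
  ring

lemma sq_sub_le_sq_of_mem_Icc {N a b : ℤ} (ha : a ∈ Set.Icc 0 N) (hb : b ∈ Set.Icc 0 N) :
    (a - b) ^ 2 ≤ N ^ 2 := by
  rw [← sq_abs]
  exact pow_le_pow_left₀ (abs_nonneg _) (abs_sub_le_of_nonneg_of_le ha.1 ha.2 hb.1 hb.2) 2

lemma two_mul_eq_of_dsq_eq {m x a b c : ℤ} (hm : |(a - b) ^ 2 - (b - c) ^ 2| < m)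
    (h : dsq (0, a) (x, b) = dsq (x, b) (m, c)) : 2 * x = m := by
  have hsum : m * (2 * x - m) + ((a - b) ^ 2 - (b - c) ^ 2) = 0 := by
    rw [← dsq_sub_dsq, h, sub_self]
  have hzero : m * (2 * x - m) = 0 := by
    refine Int.eq_zero_of_abs_lt_dvd (dvd_mul_right _ _) ?_
    rwa [eq_neg_of_add_eq_zero_left hsum, abs_neg]
  rcases mul_eq_zero.mp hzero with hm0 | hx
  · exact absurd hm (by simp [hm0])
  · linarith

lemma collin_of_two_mul_eq_add {p q r : ℤ × ℤ} (h₁ : 2 * q.1 = p.1 + r.1)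
    (h₂ : 2 * q.2 = p.2 + r.2) : Collin p q r := by
  unfold Collin
  rw [show r.1 - p.1 = 2 * (q.1 - p.1) by linarith, show r.2 - p.2 = 2 * (q.2 - p.2) by linarith]
  ring

lemma collin_of_snd_eq {p q r : ℤ × ℤ} (hq : q.2 = p.2) (hr : r.2 = p.2) : Collin p q r := by
  simp [Collin, hq, hr]

theorem stmt15_general (n k x y₁ y₂ y₃ : ℤ) (hk : k > (n - 1) ^ 2 + 1)
    (h1 : 0 ≤ y₁) (h1n : y₁ ≤ n - 1) (h2 : 0 ≤ y₂) (h2n : y₂ ≤ n - 1)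
    (h3 : 0 ≤ y₃) (h3n : y₃ ≤ n - 1)
    (harea : ¬ Collin (0, y₁) (x, y₂) (k - 1, y₃))
    (hiso : dsq (0, y₁) (x, y₂) = dsq (x, y₂) (k - 1, y₃)) :
    y₁ = y₃ ∧ y₂ ≠ y₁ ∧ 2 * x = k - 1 := by
  have hbound : |(y₁ - y₂) ^ 2 - (y₂ - y₃) ^ 2| < k - 1 := by
    have hl := sq_sub_le_sq_of_mem_Icc ⟨h1, h1n⟩ ⟨h2, h2n⟩
    have hr := sq_sub_le_sq_of_mem_Icc ⟨h2, h2n⟩ ⟨h3, h3n⟩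
    exact (abs_sub_le_of_nonneg_of_le (sq_nonneg _) hl (sq_nonneg _) hr).trans_lt (by linarith)
  have hx : 2 * x = k - 1 := two_mul_eq_of_dsq_eq hbound hiso
  have hsq : (y₁ - y₂) ^ 2 = (y₂ - y₃) ^ 2 := by
    have := dsq_sub_dsq (k - 1) x y₁ y₂ y₃
    rw [hiso, sub_self, hx, sub_self, mul_zero, zero_add] at this
    linarith
  rcases sq_eq_sq_iff_eq_or_eq_neg.mp hsq with hmid | hsym
  · refine absurd (collin_of_two_mul_eq_add ?_ ?_) harea
    · exact hx.trans (zero_add _).symm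
    · change 2 * y₂ = y₁ + y₃
      linarith
  · have hy : y₁ = y₃ := by linarith
    exact ⟨hy, fun h21 => harea (collin_of_snd_eq h21 hy.symm), hx⟩

theorem stmt15 (n k x y₁ y₂ y₃ : ℤ) (hn : 2 ≤ n) (hk : k > (n - 1) ^ 2 + 1)
    (h1 : 0 ≤ y₁) (h1n : y₁ ≤ n - 1) (h2 : 0 ≤ y₂) (h2n : y₂ ≤ n - 1)
    (h3 : 0 ≤ y₃) (h3n : y₃ ≤ n - 1) (hx1 : 0 < x) (hx2 : x < k - 1)
    (harea : ¬ Collin (0, y₁) (x, y₂) (k - 1, y₃))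
    (hiso : dsq (0, y₁) (x, y₂) = dsq (x, y₂) (k - 1, y₃)) :
    y₁ = y₃ ∧ y₂ ≠ y₁ ∧ 2 * x = k - 1 :=
  stmt15_general n k x y₁ y₂ y₃ hk h1 h1n h2 h2n h3 h3n harea hiso
end
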